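/- arXiv:1706.00219 — 5 statements merged into one kernel-verified Lean document; each statement's English description precedes it below -/
import Mathlib

section
/- For every instance with n ≥ 2 demand levels there exists a non-trivial pure Nash equilibrium, i.e., a pair (p,q) of nonnegative prices with p ∈ BR(q), q ∈ BR(p) and p + q ≤ v_1. -/
/-!
Both sellers charge half of the same value `v i`, for a level `i` chosen so that undercutting
to any level `j` does not pay: `(v j - v i / 2) * d j ≤ v i / 2 * d i`. To find `i`, call a
level upward stable if no deviation to a level of higher value pays (the level of highest
value is), and take an upward stable `i` of maximal revenue `v i * d i`. If some deviation
paid, the most profitable one, to `j`, has `v j < v i`. Lowering the opponent's price from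
`v i / 2` to `v j / 2` adds `(v i - v j) / 2 * d k` to the gain of deviating to `k`, which is
largest at `k = j` among the levels above `v j`; so `j` is upward stable, and
`v j * d j > v i * d i` because `d j ≥ d i`, a contradiction.
-/

open scoped Classical

/-- The demand function induced by an instance with `n` demand levels,
values `v` and demands `d` (indices `1,…,n`):
`demand n v d x = d i` for the largest index `i ∈ {1,…,n}` with `x ≤ v i`,
and `0` if there is no such index. -/
noncomputable def demand (n : ℕ) (v d : ℕ → ℝ) (x : ℝ) : ℝ :=
  if h : ((Finset.Icc 1 n).filter (fun i => x ≤ v i)).Nonempty then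
    d (((Finset.Icc 1 n).filter (fun i => x ≤ v i)).max' h)
  else 0

/-- Total revenue at total price `x`. -/
noncomputable def rev (n : ℕ) (v d : ℕ → ℝ) (x : ℝ) : ℝ := x * demand n v d x

/-- Social welfare at total price `x` (with the convention `d 0 = 0`). -/
noncomputable def welfare (n : ℕ) (v d : ℕ → ℝ) (x : ℝ) : ℝ :=
  ∑ i ∈ (Finset.Icc 1 n).filter (fun i => x ≤ v i),
    v i * (d i - if 1 < i then d (i - 1) else 0)

/-- `InBR n v d q p` : `p` is a best response to the price `q` of the other seller. -/
def InBR (n : ℕ) (v d : ℕ → ℝ) (q p : ℝ) : Prop :=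
  0 ≤ p ∧ ∀ p', 0 ≤ p' → p' * demand n v d (p' + q) ≤ p * demand n v d (p + q)

/-- `(p, q)` is a pure Nash equilibrium. -/
def IsNE (n : ℕ) (v d : ℕ → ℝ) (p q : ℝ) : Prop :=
  0 ≤ p ∧ 0 ≤ q ∧ InBR n v d q p ∧ InBR n v d p q

/-- A valid instance with `n ≥ 2` demand levels: positive values strictly
decreasing in the index, positive demands strictly increasing in the index. -/
def ValidInstance (n : ℕ) (v d : ℕ → ℝ) : Prop :=
  2 ≤ n ∧ 0 < v n ∧ (∀ i j, 1 ≤ i → i < j → j ≤ n → v j < v i) ∧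
    0 < d 1 ∧ (∀ i j, 1 ≤ i → i < j → j ≤ n → d i < d j)

section SplitLevel

variable {ι : Type*} (s : Finset ι) (v d : ι → ℝ)

def IsSplitLevel (i : ι) : Prop :=
  ∀ j ∈ s, (v j - v i / 2) * d j ≤ v i / 2 * d i

def IsUpwardSplitLevel (i : ι) : Prop :=
  ∀ j ∈ s, v i ≤ v j → (v j - v i / 2) * d j ≤ v i / 2 * d i

variable {s v d}

lemma isUpwardSplitLevel_of_isMaxOn {i : ι} (hi : i ∈ s)
    (hanti : ∀ j ∈ s, ∀ k ∈ s, v j ≤ v k → d k ≤ d j) (hmax : IsMaxOn v s i) :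
    IsUpwardSplitLevel s v d i := by
  intro j hj hij
  have hvj : v j = v i := le_antisymm (hmax hj) hij
  have hdj : d j = d i := le_antisymm (hanti i hi j hj hij) (hanti j hj i hi hvj.le)
  rw [hvj, hdj]
  linarith

lemma isUpwardSplitLevel_of_isMaxOn_deviation {i j : ι} (hj : j ∈ s)
    (hanti : ∀ j ∈ s, ∀ k ∈ s, v j ≤ v k → d k ≤ d j)
    (hmax : IsMaxOn (fun k => (v k - v i / 2) * d k) s j) (hji : v j < v i) :
    IsUpwardSplitLevel s v d j := by
  intro k hk hjk
  have hdk : d k ≤ d j := hanti j hj k hk hjk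
  have hdev : (v k - v i / 2) * d k ≤ (v j - v i / 2) * d j := hmax hk
  nlinarith

lemma mul_lt_mul_of_profitable_deviation {i j : ι} (hi : i ∈ s) (hj : j ∈ s)
    (hanti : ∀ j ∈ s, ∀ k ∈ s, v j ≤ v k → d k ≤ d j) (hvi : 0 ≤ v i) (hji : v j < v i)
    (hdev : v i / 2 * d i < (v j - v i / 2) * d j) :
    v i * d i < v j * d j := by
  have hdij : d i ≤ d j := hanti j hj i hi hji.le
  nlinarith

theorem exists_isSplitLevel (hs : s.Nonempty)
    (hanti : ∀ j ∈ s, ∀ k ∈ s, v j ≤ v k → d k ≤ d j) (hv : ∀ i ∈ s, 0 ≤ v i) :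
    ∃ i ∈ s, IsSplitLevel s v d i := by
  set stable := s.filter fun i => IsUpwardSplitLevel s v d i
  obtain ⟨top, htop, htopmax⟩ := s.exists_max_image v hs
  have htop_stable : top ∈ stable :=
    Finset.mem_filter.2 ⟨htop, isUpwardSplitLevel_of_isMaxOn htop hanti htopmax⟩
  obtain ⟨i, hi, himax⟩ := stable.exists_max_image (fun i => v i * d i) ⟨top, htop_stable⟩
  obtain ⟨hi, hi_stable⟩ := Finset.mem_filter.1 hi
  refine ⟨i, hi, ?_⟩
  by_contra hbad
  simp only [IsSplitLevel, not_forall, not_le, exists_prop] at hbad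
  obtain ⟨j₀, hj₀, hj₀dev⟩ := hbad
  obtain ⟨j, hj, hjmax⟩ := s.exists_max_image (fun k => (v k - v i / 2) * d k) ⟨j₀, hj₀⟩
  have hdev : v i / 2 * d i < (v j - v i / 2) * d j := hj₀dev.trans_le (hjmax j₀ hj₀)
  have hji : v j < v i := by
    by_contra! hij
    exact (hi_stable j hj hij).not_gt hdev
  have hj_stable : j ∈ stable :=
    Finset.mem_filter.2 ⟨hj, isUpwardSplitLevel_of_isMaxOn_deviation hj hanti hjmax hji⟩
  exact (himax j hj_stable).not_gt
    (mul_lt_mul_of_profitable_deviation hi hj hanti (hv i hi) hji hdev)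

end SplitLevel

section Game

variable {n : ℕ} {v d : ℕ → ℝ}

lemma ValidInstance.strictAntiOn (h : ValidInstance n v d) : StrictAntiOn v (Set.Icc 1 n) :=
  fun i hi j hj hij => h.2.2.1 i j hi.1 hij hj.2

lemma ValidInstance.strictMonoOn (h : ValidInstance n v d) : StrictMonoOn d (Set.Icc 1 n) :=
  fun i hi j hj hij => h.2.2.2.2 i j hi.1 hij hj.2

lemma ValidInstance.one_mem (h : ValidInstance n v d) : 1 ∈ Finset.Icc 1 n :=
  Finset.mem_Icc.2 ⟨le_rfl, one_le_two.trans h.1⟩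

variable {i : ℕ}

lemma ValidInstance.value_le_value_one (h : ValidInstance n v d) (hi : i ∈ Finset.Icc 1 n) :
    v i ≤ v 1 :=
  h.strictAntiOn.antitoneOn (Finset.mem_Icc.1 h.one_mem) (Finset.mem_Icc.1 hi)
    (Finset.mem_Icc.1 hi).1

lemma ValidInstance.value_pos (h : ValidInstance n v d) (hi : i ∈ Finset.Icc 1 n) : 0 < v i := by
  obtain ⟨h1i, hin⟩ := Finset.mem_Icc.1 hi
  exact h.2.1.trans_le (h.strictAntiOn.antitoneOn ⟨h1i, hin⟩ ⟨h1i.trans hin, le_rfl⟩ hin)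

lemma ValidInstance.level_pos (h : ValidInstance n v d) (hi : i ∈ Finset.Icc 1 n) : 0 < d i :=
  h.2.2.2.1.trans_le (h.strictMonoOn.monotoneOn (Finset.mem_Icc.1 h.one_mem)
    (Finset.mem_Icc.1 hi) (Finset.mem_Icc.1 hi).1)

lemma ValidInstance.level_le_of_value_le (h : ValidInstance n v d) {j k : ℕ}
    (hj : j ∈ Finset.Icc 1 n) (hk : k ∈ Finset.Icc 1 n) (hjk : v j ≤ v k) : d k ≤ d j := by
  rw [Finset.mem_Icc] at hj hk
  exact h.strictMonoOn.monotoneOn hk hj ((h.strictAntiOn.le_iff_ge hj hk).1 hjk)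

lemma demand_eq_zero_or_exists (n : ℕ) (v d : ℕ → ℝ) (x : ℝ) :
    demand n v d x = 0 ∨ ∃ k ∈ Finset.Icc 1 n, x ≤ v k ∧ demand n v d x = d k := by
  unfold demand
  split_ifs with hne
  · obtain ⟨hk, hxk⟩ := Finset.mem_filter.1 (Finset.max'_mem _ hne)
    exact Or.inr ⟨_, hk, hxk, rfl⟩
  · exact Or.inl rfl

lemma demand_value (hv : StrictAntiOn v (Set.Icc 1 n)) (hi : i ∈ Finset.Icc 1 n) :
    demand n v d (v i) = d i := by
  have hmem : i ∈ (Finset.Icc 1 n).filter (fun j => v i ≤ v j) := Finset.mem_filter.2 ⟨hi, le_rfl⟩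
  rw [demand, dif_pos ⟨i, hmem⟩]
  congr 1
  refine le_antisymm (Finset.max'_le _ _ _ fun j hj => ?_) (Finset.le_max' _ i hmem)
  obtain ⟨hj, hij⟩ := Finset.mem_filter.1 hj
  exact (hv.le_iff_ge (Finset.mem_Icc.1 hi) (Finset.mem_Icc.1 hj)).1 hij

lemma inBR_half_value (hv : StrictAntiOn v (Set.Icc 1 n)) (hd : ∀ k ∈ Finset.Icc 1 n, 0 ≤ d k)
    (hi : i ∈ Finset.Icc 1 n) (hvi : 0 ≤ v i) (hsplit : IsSplitLevel (Finset.Icc 1 n) v d i) :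
    InBR n v d (v i / 2) (v i / 2) := by
  refine ⟨by positivity, fun p hp => ?_⟩
  rw [add_halves, demand_value hv hi]
  rcases demand_eq_zero_or_exists n v d (p + v i / 2) with h0 | ⟨k, hk, hpk, hdk⟩
  · rw [h0, mul_zero]
    exact mul_nonneg (by positivity) (hd i hi)
  · rw [hdk]
    calc p * d k ≤ (v k - v i / 2) * d k := mul_le_mul_of_nonneg_right (by linarith) (hd k hk)
      _ ≤ v i / 2 * d i := hsplit k hk

end Game

/-- For every instance with `n ≥ 2` demand levels there exists a non-trivial
pure Nash equilibrium. -/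
theorem stmt_0 (n : ℕ) (v d : ℕ → ℝ) (h : ValidInstance n v d) :
    ∃ p q : ℝ, IsNE n v d p q ∧ p + q ≤ v 1 := by
  obtain ⟨i, hi, hsplit⟩ := exists_isSplitLevel ⟨1, h.one_mem⟩
    (fun j hj k hk => h.level_le_of_value_le hj hk) fun k hk => (h.value_pos hk).le
  have hBR : InBR n v d (v i / 2) (v i / 2) :=
    inBR_half_value h.strictAntiOn (fun k hk => (h.level_pos hk).le) hi (h.value_pos hi).le hsplit
  refine ⟨v i / 2, v i / 2, ⟨hBR.1, hBR.1, hBR, hBR⟩, ?_⟩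
  rw [add_halves]
  exact h.value_le_value_one hi
end

section
/- If (p,q) is a pure Nash equilibrium, then for every x with min(p,q) ≤ x ≤ max(p,q) the pair (x, p+q−x) is also a pure Nash equilibrium. In particular, ((p+q)/2, (p+q)/2) is a pure Nash equilibrium. -/
open scoped Classical

/-!
Write `D` for the demand and `s = p + q`. Since `D ≥ 0`, `p` being a best response to `q`
says exactly that `(t - q) * D t ≤ p * D s` for every total price `t` (for `t < q` the left
side is nonpositive). For fixed `s` and `t` this is linear in the pair `(q, p)`, so best
responses, and hence equilibria with total price `s`, are closed under convex combinations.
As `(q, p)` is an equilibrium together with `(p, q)`, so is every point of the segment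
between them.
-/

lemma ValidInstance.d_pos {n : ℕ} {v d : ℕ → ℝ} (h : ValidInstance n v d) {i : ℕ}
    (hi1 : 1 ≤ i) (hin : i ≤ n) : 0 < d i := by
  rcases hi1.eq_or_lt with rfl | hlt
  · exact h.2.2.2.1
  · exact h.2.2.2.1.trans (h.2.2.2.2 1 i le_rfl hlt hin)

lemma demand_nonneg {n : ℕ} {v d : ℕ → ℝ} (h : ValidInstance n v d) (x : ℝ) :
    0 ≤ demand n v d x := by
  unfold demand
  split_ifs with hne
  · obtain ⟨hIcc, -⟩ := Finset.mem_filter.mp (Finset.max'_mem _ hne)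
    obtain ⟨hi1, hin⟩ := Finset.mem_Icc.mp hIcc
    exact (h.d_pos hi1 hin).le
  · exact le_rfl

section BestResponse

variable {n : ℕ} {v d : ℕ → ℝ}

lemma inBR_iff_forall_total (hD : ∀ x, 0 ≤ demand n v d x) {q p : ℝ} :
    InBR n v d q p ↔ 0 ≤ p ∧ ∀ t, (t - q) * demand n v d t ≤ p * demand n v d (p + q) := by
  refine ⟨fun ⟨hp, hbr⟩ => ⟨hp, fun t => ?_⟩, fun ⟨hp, hbr⟩ => ⟨hp, fun p' _ => ?_⟩⟩
  · rcases le_or_gt q t with hqt | htq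
    · simpa using hbr (t - q) (sub_nonneg.mpr hqt)
    · exact (mul_nonpos_of_nonpos_of_nonneg (sub_nonpos.mpr htq.le) (hD t)).trans
        (mul_nonneg hp (hD _))
  · simpa using hbr (p' + q)

lemma InBR.convex_comb (hD : ∀ x, 0 ≤ demand n v d x) {p q p' q' a b : ℝ}
    (h : InBR n v d q p) (h' : InBR n v d q' p') (hsum : p + q = p' + q')
    (ha : 0 ≤ a) (hb : 0 ≤ b) (hab : a + b = 1) :
    InBR n v d (a * q + b * q') (a * p + b * p') := by
  rw [inBR_iff_forall_total hD] at h h' ⊢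
  obtain ⟨hp, hbr⟩ := h
  obtain ⟨hp', hbr'⟩ := h'
  have htotal : a * p + b * p' + (a * q + b * q') = p + q := by
    linear_combination hab * (p + q) + b * hsum.symm
  refine ⟨by positivity, fun t => ?_⟩
  rw [htotal]
  have h₁ := mul_le_mul_of_nonneg_left (hbr t) ha
  have h₂ := mul_le_mul_of_nonneg_left (hbr' t) hb
  rw [← hsum] at h₂
  linear_combination h₁ + h₂ - (t * demand n v d t) * hab

lemma IsNE.symm {p q : ℝ} (h : IsNE n v d p q) : IsNE n v d q p :=
  ⟨h.2.1, h.1, h.2.2.2, h.2.2.1⟩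

lemma IsNE.convex_comb (hD : ∀ x, 0 ≤ demand n v d x) {p q p' q' a b : ℝ}
    (h : IsNE n v d p q) (h' : IsNE n v d p' q') (hsum : p + q = p' + q')
    (ha : 0 ≤ a) (hb : 0 ≤ b) (hab : a + b = 1) :
    IsNE n v d (a * p + b * p') (a * q + b * q') := by
  have hfirst := h.2.2.1.convex_comb hD h'.2.2.1 hsum ha hb hab
  have hsecond := h.2.2.2.convex_comb hD h'.2.2.2 (by linarith) ha hb hab
  exact ⟨hfirst.1, hsecond.1, hfirst, hsecond⟩

end BestResponse

/-- The set of equilibria with a given total price is convex: if `(p,q)` is a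
pure Nash equilibrium then so is `(x, p+q-x)` for every `x` between `p` and
`q`; in particular `((p+q)/2, (p+q)/2)` is a pure Nash equilibrium. -/
theorem stmt_2 (n : ℕ) (v d : ℕ → ℝ) (h : ValidInstance n v d)
    (p q : ℝ) (hpq : IsNE n v d p q) :
    (∀ x : ℝ, min p q ≤ x → x ≤ max p q → IsNE n v d x (p + q - x)) ∧
    IsNE n v d ((p + q) / 2) ((p + q) / 2) := by
  have hD := demand_nonneg h
  have hsegment : ∀ x, min p q ≤ x → x ≤ max p q → IsNE n v d x (p + q - x) := by
    intro x hmin hmax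
    obtain ⟨a, b, ha, hb, hab, rfl⟩ : x ∈ segment ℝ p q := by
      rw [segment_eq_uIcc]
      exact ⟨hmin, hmax⟩
    have hcomplement : p + q - (a • p + b • q) = a * q + b * p := by
      simp only [smul_eq_mul]
      linear_combination -(p + q) * hab
    rw [hcomplement]
    exact hpq.convex_comb hD hpq.symm (add_comm p q) ha hb hab
  refine ⟨hsegment, ?_⟩
  have hmidpoint := hsegment ((p + q) / 2)
    (by rcases le_total p q with hle | hle <;> simp [hle] <;> linarith)
    (by rcases le_total p q with hle | hle <;> simp [hle] <;> linarith)
  rwa [show p + q - (p + q) / 2 = (p + q) / 2 by ring] at hmidpoint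
end

section
/- Welfare and revenue of equilibria are non-increasing in the total price: if (p,q) is a pure Nash equilibrium and w is any total price with w ≥ p+q, then R(p+q) ≥ R(w) and SW(p+q) ≥ SW(w). In particular, among all pure Nash equilibria, one with minimal total price has both the highest welfare and the highest revenue, and one with maximal total price has both the lowest welfare and the lowest revenue. -/
open scoped Classical

/-! If `(p, q)` is an equilibrium and `w ≥ p + q`, each seller could have deviated so that the
total price becomes `w`: seller one to `w - q`, seller two to `w - p`. Adding the two best-response
inequalities gives `(2w - p - q) · 𝒟(w) ≤ (p + q) · 𝒟(p + q)`, and the left side is at least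
`w · 𝒟(w)` since `w ≥ p + q` and demand is nonnegative. Welfare is antitone in the total price
for every instance, because a higher price only drops nonnegative summands. -/

namespace ValidInstance

variable {n : ℕ} {v d : ℕ → ℝ}

theorem d_pos_s3 (h : ValidInstance n v d) {i : ℕ} (h1 : 1 ≤ i) (hn : i ≤ n) : 0 < d i := by
  obtain ⟨-, -, -, hd1, hd⟩ := h
  rcases h1.eq_or_lt with rfl | h1
  · exact hd1
  · exact hd1.trans (hd 1 i le_rfl h1 hn)

theorem v_pos (h : ValidInstance n v d) {i : ℕ} (h1 : 1 ≤ i) (hn : i ≤ n) : 0 < v i := by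
  obtain ⟨-, hvn, hv, -, -⟩ := h
  rcases hn.eq_or_lt with rfl | hn
  · exact hvn
  · exact hvn.trans (hv i n h1 hn le_rfl)

theorem demand_nonneg (h : ValidInstance n v d) (x : ℝ) : 0 ≤ demand n v d x := by
  unfold demand
  split_ifs with hne
  · have hmem := Finset.max'_mem _ hne
    simp only [Finset.mem_filter, Finset.mem_Icc] at hmem
    exact (h.d_pos_s3 hmem.1.1 hmem.1.2).le
  · exact le_rfl

theorem welfare_summand_nonneg (h : ValidInstance n v d) {i : ℕ} (h1 : 1 ≤ i) (hn : i ≤ n) :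
    0 ≤ v i * (d i - if 1 < i then d (i - 1) else 0) := by
  refine mul_nonneg (h.v_pos h1 hn).le (sub_nonneg.2 ?_)
  have hdi := h.d_pos_s3 h1 hn
  obtain ⟨-, -, -, -, hd⟩ := h
  split_ifs with hi
  · exact (hd (i - 1) i (by omega) (by omega) hn).le
  · exact hdi.le

theorem welfare_antitone (h : ValidInstance n v d) : Antitone (welfare n v d) := by
  intro x w hxw
  refine Finset.sum_le_sum_of_subset_of_nonneg (Finset.monotone_filter_right _ ?_) ?_
  · exact fun i _ hwi => hxw.trans hwi
  · intro i hi _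
    obtain ⟨h1, hn⟩ := Finset.mem_Icc.1 (Finset.mem_filter.1 hi).1
    exact h.welfare_summand_nonneg h1 hn

end ValidInstance

theorem IsNE.rev_le {n : ℕ} {v d : ℕ → ℝ} {p q w : ℝ} (hne : IsNE n v d p q)
    (hD : 0 ≤ demand n v d w) (hw : p + q ≤ w) : rev n v d w ≤ rev n v d (p + q) := by
  obtain ⟨hp, hq, ⟨-, hbr_p⟩, ⟨-, hbr_q⟩⟩ := hne
  have hdev_p := hbr_p (w - q) (by linarith)
  have hdev_q := hbr_q (w - p) (by linarith)
  rw [sub_add_cancel] at hdev_p hdev_q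
  rw [add_comm q p] at hdev_q
  unfold rev
  nlinarith [mul_nonneg (sub_nonneg.2 hw) hD]

/-- Welfare and revenue of equilibria are non-increasing in the total price;
in particular an equilibrium of minimal total price has the highest welfare
and revenue among all equilibria, and one of maximal total price the lowest. -/
theorem stmt_3 (n : ℕ) (v d : ℕ → ℝ) (h : ValidInstance n v d) :
    (∀ p q : ℝ, IsNE n v d p q → ∀ w : ℝ, p + q ≤ w →
      rev n v d w ≤ rev n v d (p + q) ∧ welfare n v d w ≤ welfare n v d (p + q)) ∧
    (∀ p q p' q' : ℝ, IsNE n v d p q → IsNE n v d p' q' → p + q ≤ p' + q' →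
      rev n v d (p' + q') ≤ rev n v d (p + q) ∧
      welfare n v d (p' + q') ≤ welfare n v d (p + q)) := by
  have hmono : ∀ p q : ℝ, IsNE n v d p q → ∀ w : ℝ, p + q ≤ w →
      rev n v d w ≤ rev n v d (p + q) ∧ welfare n v d w ≤ welfare n v d (p + q) :=
    fun _ _ hne w hw => ⟨hne.rev_le (h.demand_nonneg w) hw, h.welfare_antitone hw⟩
  exact ⟨hmono, fun p q _ _ hne _ hle => hmono p q hne _ hle⟩
end

section
/- Let p* ≥ 0 be the minimal monopolist price, i.e., R(p*) ≥ R(x) for all x ≥ 0, and p* ≤ x for every x ≥ 0 with R(x) = R(p*). Then every pure Nash equilibrium (p,q) satisfies p + q ≥ p*. -/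
open scoped Classical

/-!
If `p + q < p*`, each seller could deviate so that the total price becomes `p*`: the first
to `p* - q`, the second to `p* - p`. Adding the two equilibrium inequalities gives
`(2p* - p - q) 𝒟(p*) ≤ R(p + q)`, while minimality of `p*` makes `R(p + q) < R(p*) = p* 𝒟(p*)`.
Hence `(p* - p - q) 𝒟(p*) < 0`, impossible since `𝒟(p*) ≥ 0` (as `R(p*) ≥ R(0) = 0`).
-/

section

variable {n : ℕ} {v d : ℕ → ℝ}

lemma InBR.sub_mul_demand_le {p q : ℝ} (hbr : InBR n v d q p) {x : ℝ} (hqx : q ≤ x) :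
    (x - q) * demand n v d x ≤ p * demand n v d (p + q) := by
  simpa using hbr.2 (x - q) (sub_nonneg.mpr hqx)

lemma IsNE.two_mul_sub_mul_demand_le {p q : ℝ} (hne : IsNE n v d p q) {x : ℝ}
    (hpx : p ≤ x) (hqx : q ≤ x) :
    (2 * x - (p + q)) * demand n v d x ≤ rev n v d (p + q) := by
  have hp := hne.2.2.1.sub_mul_demand_le hqx
  have hq := hne.2.2.2.sub_mul_demand_le hpx
  rw [add_comm q p] at hq
  rw [rev]
  linarith

lemma demand_nonneg_of_rev_nonneg {x : ℝ} (hx : 0 < x) (hrev : 0 ≤ rev n v d x) :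
    0 ≤ demand n v d x :=
  nonneg_of_mul_nonneg_right hrev hx

end

theorem stmt_4_general (n : ℕ) (v d : ℕ → ℝ)
    (pstar : ℝ)
    (hmon : ∀ x : ℝ, 0 ≤ x → rev n v d x ≤ rev n v d pstar)
    (hmin : ∀ x : ℝ, 0 ≤ x → rev n v d x = rev n v d pstar → pstar ≤ x) :
    ∀ p q : ℝ, IsNE n v d p q → pstar ≤ p + q := by
  intro p q hne
  by_contra! hlt
  have hpq : 0 ≤ p + q := add_nonneg hne.1 hne.2.1
  have hrev_lt : rev n v d (p + q) < rev n v d pstar :=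
    (hmon _ hpq).lt_of_ne fun heq => hlt.not_ge (hmin _ hpq heq)
  have hdemand : 0 ≤ demand n v d pstar :=
    demand_nonneg_of_rev_nonneg (hpq.trans_lt hlt) (by simpa [rev] using hmon 0 le_rfl)
  have hdev := hne.two_mul_sub_mul_demand_le (x := pstar) (by linarith [hne.2.1])
    (by linarith [hne.1])
  rw [show rev n v d pstar = pstar * demand n v d pstar from rfl] at hrev_lt
  nlinarith [mul_nonneg (sub_nonneg.mpr hlt.le) hdemand]

/-- The total price in any pure Nash equilibrium is at least the minimal
monopolist price. -/
theorem stmt_4 (n : ℕ) (v d : ℕ → ℝ) (h : ValidInstance n v d)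
    (pstar : ℝ) (hstar0 : 0 ≤ pstar)
    (hmon : ∀ x : ℝ, 0 ≤ x → rev n v d x ≤ rev n v d pstar)
    (hmin : ∀ x : ℝ, 0 ≤ x → rev n v d x = rev n v d pstar → pstar ≤ x) :
    ∀ p q : ℝ, IsNE n v d p q → pstar ≤ p + q :=
  stmt_4_general n v d pstar hmon hmin
end

section
/- (Slow convergence.) Fix 0 < ε < 1/2 and consider the instance with n = 2 demand levels given by v_1 = 1, v_2 = 1 − ε, d_1 = 1, d_2 = 1/(1 − 2ε). For every integer m ≥ 0 with m + 1 < 1/(2ε): (a) the unique best response to the price m·ε is 1 − (m+1)·ε, i.e. BR(m·ε) = {1 − (m+1)·ε}; and (b) the unique best response to the price 1 − (m+1)·ε is (m+1)·ε, i.e. BR(1 − (m+1)·ε) = {(m+1)·ε}. (Hence the alternating best-response dynamics starting from prices (0,0) requires each seller to update his price at least ⌊1/(2ε)⌋ − 1 = W − 1 times before reaching an equilibrium, where W = d_2/(d_2 − d_1) = 1/(2ε).) -/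
/-!
With two demand levels the revenue `p ↦ p · 𝒟(p + q)` is increasing on each of the intervals
`[0, v₂ - q]` and `(v₂ - q, v₁ - q]` and vanishes beyond, so the best response to `q` is whichever
of `v₂ - q`, `v₁ - q` earns strictly more. Against `q = mε` the lower price wins because
`(1 - mε)(1 - 2ε) < 1 - (m+1)ε` reduces to `2mε < 1`; against `q = 1 - (m+1)ε` the higher price
wins because `mε < (m+1)ε(1 - 2ε)` reduces to `2(m+1)ε < 1`.
-/

open scoped Classical

lemma demand_two (v d : ℕ → ℝ) (hv : v 2 ≤ v 1) (x : ℝ) :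
    demand 2 v d x = if x ≤ v 2 then d 2 else if x ≤ v 1 then d 1 else 0 := by
  have hIcc : Finset.Icc 1 2 = {1, 2} := rfl
  by_cases h2 : x ≤ v 2
  · simp [demand, hIcc, Finset.filter_insert, Finset.filter_singleton, Finset.max'_insert, h2,
      h2.trans hv]
  · by_cases h1 : x ≤ v 1 <;>
      simp [demand, hIcc, Finset.filter_insert, Finset.filter_singleton, h1, h2]

lemma inBR_iff_eq_of_forall_lt {n : ℕ} {v d : ℕ → ℝ} {q t : ℝ} (ht : 0 ≤ t)
    (hlt : ∀ p, 0 ≤ p → p ≠ t → p * demand n v d (p + q) < t * demand n v d (t + q))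
    (p : ℝ) : InBR n v d q p ↔ p = t := by
  constructor
  · rintro ⟨hp, hbr⟩
    by_contra hne
    exact (hbr t ht).not_gt (hlt p hp hne)
  · rintro rfl
    refine ⟨ht, fun p' hp' => ?_⟩
    rcases eq_or_ne p' p with rfl | hne
    · exact le_rfl
    · exact (hlt p' hp' hne).le

section TwoLevels

variable {v d : ℕ → ℝ} {q : ℝ}

lemma inBR_two_iff_eq_sub_two (hv : v 2 ≤ v 1) (hq : q ≤ v 2) (hd1 : 0 ≤ d 1) (hd2 : 0 < d 2)
    (hrev : (v 1 - q) * d 1 < (v 2 - q) * d 2) (p : ℝ) :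
    InBR 2 v d q p ↔ p = v 2 - q := by
  refine inBR_iff_eq_of_forall_lt (sub_nonneg.2 hq) (fun p hp hne => ?_) p
  rw [demand_two v d hv, demand_two v d hv, sub_add_cancel, if_pos le_rfl]
  split_ifs with h2 h1
  · exact mul_lt_mul_of_pos_right (lt_of_le_of_ne (by linarith) hne) hd2
  · calc p * d 1 ≤ (v 1 - q) * d 1 := mul_le_mul_of_nonneg_right (by linarith) hd1
      _ < (v 2 - q) * d 2 := hrev
  · have : 0 ≤ (v 1 - q) * d 1 := mul_nonneg (by linarith) hd1
    linarith

lemma inBR_two_iff_eq_sub_one (hv : v 2 < v 1) (hq : q < v 1) (hd1 : 0 < d 1) (hd2 : 0 ≤ d 2)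
    (hrev : (v 2 - q) * d 2 < (v 1 - q) * d 1) (p : ℝ) :
    InBR 2 v d q p ↔ p = v 1 - q := by
  refine inBR_iff_eq_of_forall_lt (sub_nonneg.2 hq.le) (fun p hp hne => ?_) p
  rw [demand_two v d hv.le, demand_two v d hv.le, sub_add_cancel, if_neg hv.not_ge, if_pos le_rfl]
  split_ifs with h2 h1
  · calc p * d 2 ≤ (v 2 - q) * d 2 := mul_le_mul_of_nonneg_right (by linarith) hd2
      _ < (v 1 - q) * d 1 := hrev
  · exact mul_lt_mul_of_pos_right (lt_of_le_of_ne (by linarith) hne) hd1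
  · rw [mul_zero]
    exact mul_pos (sub_pos.2 hq) hd1

end TwoLevels

theorem stmt_7_general (ε : ℝ) (v d : ℕ → ℝ) (hv1 : v 1 = 1) (hv2 : v 2 = 1 - ε)
    (hd1 : d 1 = 1) (hd2 : d 2 = 1 / (1 - 2 * ε)) :
    ∀ m : ℕ, (m : ℝ) + 1 < 1 / (2 * ε) →
      (∀ p : ℝ, InBR 2 v d ((m : ℝ) * ε) p ↔ p = 1 - ((m : ℝ) + 1) * ε) ∧
      (∀ p : ℝ, InBR 2 v d (1 - ((m : ℝ) + 1) * ε) p ↔ p = ((m : ℝ) + 1) * ε) := by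
  intro m hm
  have hm0 : (0 : ℝ) ≤ m := m.cast_nonneg
  have hε : 0 < ε := by
    by_contra! hε
    linarith [one_div_nonpos.2 (by linarith : 2 * ε ≤ 0)]
  replace hm : ((m : ℝ) + 1) * (2 * ε) < 1 := (lt_div_iff₀ (by positivity)).1 hm
  have hε2 : 0 < 1 - 2 * ε := by nlinarith
  have hv : v 2 < v 1 := by linarith
  have hd2pos : 0 < d 2 := by rw [hd2]; exact one_div_pos.2 hε2
  constructor
  · have hrev : (v 1 - m * ε) * d 1 < (v 2 - m * ε) * d 2 := by
      rw [hv1, hv2, hd1, hd2, mul_one, mul_one_div, lt_div_iff₀ hε2]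
      nlinarith
    intro p
    rw [inBR_two_iff_eq_sub_two hv.le (by nlinarith) (by linarith) hd2pos hrev, hv2]
    ring_nf
  · have hrev : (v 2 - (1 - (m + 1) * ε)) * d 2 < (v 1 - (1 - (m + 1) * ε)) * d 1 := by
      rw [hv1, hv2, hd1, hd2, mul_one, mul_one_div, div_lt_iff₀ hε2]
      nlinarith
    intro p
    rw [inBR_two_iff_eq_sub_one hv (by rw [hv1]; nlinarith) (by linarith) hd2pos.le hrev, hv1]
    ring_nf

/-- Slow convergence: in the instance `v₁ = 1`, `v₂ = 1 - ε`, `d₁ = 1`,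
`d₂ = 1/(1-2ε)`, for every `m` with `m + 1 < 1/(2ε)` the unique best response
to `m·ε` is `1 - (m+1)·ε`, and the unique best response to `1 - (m+1)·ε`
is `(m+1)·ε`. -/
theorem stmt_7 (ε : ℝ) (hε0 : 0 < ε) (hε : ε < 1 / 2)
    (v d : ℕ → ℝ) (hv1 : v 1 = 1) (hv2 : v 2 = 1 - ε)
    (hd1 : d 1 = 1) (hd2 : d 2 = 1 / (1 - 2 * ε)) :
    ∀ m : ℕ, (m : ℝ) + 1 < 1 / (2 * ε) →
      (∀ p : ℝ, InBR 2 v d ((m : ℝ) * ε) p ↔ p = 1 - ((m : ℝ) + 1) * ε) ∧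
      (∀ p : ℝ, InBR 2 v d (1 - ((m : ℝ) + 1) * ε) p ↔ p = ((m : ℝ) + 1) * ε) :=
  stmt_7_general ε v d hv1 hv2 hd1 hd2
end
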